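/- In max-times algebra, for any n×n nonnegative matrix B with Tr(B) ≤ 1, the identity B* ⊗ (1ᵀ ⊗ B*)⁻ = (1ᵀ ⊗ B*)⁻ holds, where 1 is the all-ones vector; equivalently, for each i, max_j (B*)_{ij} / ‖b*_j‖ = 1/‖b*_i‖, where ‖b*_j‖ = max_i (B*)_{ij} is the maximum of column j of B*. -/

import Mathlib

/-- Maximum of a function over `Fin n` (nonempty since `0 < n`). -/
noncomputable def vmax {n : ℕ} (hn : 0 < n) (f : Fin n → ℝ) : ℝ :=
  Finset.univ.sup' (Finset.univ_nonempty_iff.mpr ⟨⟨0, hn⟩⟩) f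

/-- Minimum of a function over `Fin n`. -/
noncomputable def vmin {n : ℕ} (hn : 0 < n) (f : Fin n → ℝ) : ℝ :=
  Finset.univ.inf' (Finset.univ_nonempty_iff.mpr ⟨⟨0, hn⟩⟩) f

/-- Max-times matrix product. -/
noncomputable def mtProd {n : ℕ} (hn : 0 < n) (X Y : Matrix (Fin n) (Fin n) ℝ) :
    Matrix (Fin n) (Fin n) ℝ :=
  fun i j => vmax hn (fun k => X i k * Y k j)

/-- Max-times matrix powers, `B^0 = I`. -/
noncomputable def mtPow {n : ℕ} (hn : 0 < n) (B : Matrix (Fin n) (Fin n) ℝ) :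
    ℕ → Matrix (Fin n) (Fin n) ℝ
  | 0 => fun i j => if i = j then (1 : ℝ) else 0
  | (k + 1) => mtProd hn B (mtPow hn B k)

/-- Kleene star: entrywise maximum of `B^0, ..., B^(n-1)`. -/
noncomputable def kstar {n : ℕ} (hn : 0 < n) (B : Matrix (Fin n) (Fin n) ℝ) :
    Matrix (Fin n) (Fin n) ℝ :=
  fun i j => vmax hn (fun k : Fin n => mtPow hn B k.1 i j)

/-- Max-times matrix-vector product. -/
noncomputable def mtVec {n : ℕ} (hn : 0 < n) (X : Matrix (Fin n) (Fin n) ℝ)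
    (x : Fin n → ℝ) : Fin n → ℝ :=
  fun i => vmax hn (fun j => X i j * x j)

/-! Because `Tr(B) ≤ 1`, every cycle of the weighted digraph of `B` has weight at most one.
Cutting a cycle out of an optimal path of length `m ≥ n` therefore does not decrease its weight,
so `B^m ≤ B*` for every `m`, and `B*` is max-times idempotent:
`B*_{li} B*_{ij} ≤ B*_{lj}`. Taking `l` on which column `i` of `B*` attains its maximum gives
`B*_{ij} ‖b*_i‖ ≤ ‖b*_j‖`, i.e. every term of the left-hand side is at most `1 / ‖b*_i‖`,
and the term `j = i` reaches this bound since `B*_{ii} ≥ 1`. -/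

lemma exists_lt_le_card_apply_eq {α : Type*} [Fintype α] (f : ℕ → α) :
    ∃ a b, a < b ∧ b ≤ Fintype.card α ∧ f a = f b := by
  obtain ⟨s, t, hst, heq⟩ := Fintype.exists_ne_map_eq_of_card_lt
    (fun t : Fin (Fintype.card α + 1) => f t) (by simp)
  rcases Fin.lt_or_lt_of_ne hst with h | h
  · exact ⟨s, t, h, Nat.lt_succ_iff.mp t.2, heq⟩
  · exact ⟨t, s, h, Nat.lt_succ_iff.mp s.2, heq.symm⟩

section vmax

variable {n : ℕ} (hn : 0 < n)

lemma le_vmax (f : Fin n → ℝ) (j : Fin n) : f j ≤ vmax hn f :=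
  Finset.le_sup' f (Finset.mem_univ j)

lemma vmax_le {f : Fin n → ℝ} {c : ℝ} (h : ∀ j, f j ≤ c) : vmax hn f ≤ c :=
  Finset.sup'_le _ f fun j _ => h j

lemma exists_vmax_eq (f : Fin n → ℝ) : ∃ j, vmax hn f = f j := by
  obtain ⟨j, -, h⟩ := Finset.exists_mem_eq_sup' (Finset.univ_nonempty_iff.mpr ⟨⟨0, hn⟩⟩) f
  exact ⟨j, h⟩

end vmax

section mtPow

variable {n : ℕ} (hn : 0 < n) (B : Matrix (Fin n) (Fin n) ℝ)

lemma mtPow_nonneg (hB : ∀ i j, 0 ≤ B i j) (m : ℕ) (i j : Fin n) : 0 ≤ mtPow hn B m i j := by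
  induction m generalizing i with
  | zero => simp only [mtPow]; split_ifs <;> norm_num
  | succ m ih =>
    exact (mul_nonneg (hB i _) (ih _)).trans
      (le_vmax hn (fun k => B i k * mtPow hn B m k j) ⟨0, hn⟩)

lemma mtPow_one (hB : ∀ i j, 0 ≤ B i j) : mtPow hn B 1 = B := by
  ext i j
  apply le_antisymm
  · refine vmax_le hn fun k => ?_
    simp only [mtPow]
    split_ifs with hkj
    · rw [hkj, mul_one]
    · rw [mul_zero]; exact hB i j
  · calc B i j = B i j * mtPow hn B 0 j j := by simp [mtPow]
      _ ≤ _ := le_vmax hn (fun k => B i k * mtPow hn B 0 k j) j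

lemma mtPow_mul_mtPow_le (hB : ∀ i j, 0 ≤ B i j) (a b : ℕ) (l i j : Fin n) :
    mtPow hn B a l i * mtPow hn B b i j ≤ mtPow hn B (a + b) l j := by
  induction a generalizing l with
  | zero =>
    simp only [mtPow, Nat.zero_add]
    split_ifs with hli
    · rw [hli, one_mul]
    · rw [zero_mul]; exact mtPow_nonneg hn B hB b l j
  | succ a ih =>
    obtain ⟨k, hk⟩ := exists_vmax_eq hn (fun k => B l k * mtPow hn B a k i)
    calc mtPow hn B (a + 1) l i * mtPow hn B b i j
        = B l k * (mtPow hn B a k i * mtPow hn B b i j) := by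
          rw [← mul_assoc]; exact congrArg (· * _) hk
      _ ≤ B l k * mtPow hn B (a + b) k j := mul_le_mul_of_nonneg_left (ih k) (hB l k)
      _ ≤ mtPow hn B (a + 1 + b) l j := by
          rw [Nat.add_right_comm]; exact le_vmax hn (fun k => B l k * mtPow hn B (a + b) k j) k

end mtPow

section pathWeight

variable {n : ℕ} (hn : 0 < n) (B : Matrix (Fin n) (Fin n) ℝ)

def pathWeight (q : ℕ → Fin n) (m : ℕ) : ℝ :=
  ∏ t ∈ Finset.range m, B (q t) (q (t + 1))

lemma pathWeight_nonneg (hB : ∀ i j, 0 ≤ B i j) (q : ℕ → Fin n) (m : ℕ) :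
    0 ≤ pathWeight B q m :=
  Finset.prod_nonneg fun _ _ => hB _ _

lemma pathWeight_add (q : ℕ → Fin n) (a s : ℕ) :
    pathWeight B q (a + s) = pathWeight B q a * pathWeight B (fun t => q (a + t)) s := by
  simp [pathWeight, Finset.prod_range_add, Nat.add_assoc]

lemma pathWeight_le_mtPow (hB : ∀ i j, 0 ≤ B i j) (q : ℕ → Fin n) (m : ℕ) :
    pathWeight B q m ≤ mtPow hn B m (q 0) (q m) := by
  induction m with
  | zero => simp [pathWeight, mtPow]
  | succ m ih =>
    calc pathWeight B q (m + 1) = pathWeight B q m * mtPow hn B 1 (q m) (q (m + 1)) := by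
          rw [mtPow_one hn B hB]; exact Finset.prod_range_succ _ m
      _ ≤ mtPow hn B m (q 0) (q m) * mtPow hn B 1 (q m) (q (m + 1)) :=
          mul_le_mul_of_nonneg_right ih (mtPow_nonneg hn B hB 1 _ _)
      _ ≤ mtPow hn B (m + 1) (q 0) (q (m + 1)) := mtPow_mul_mtPow_le hn B hB m 1 _ _ _

lemma exists_path_mtPow_le_pathWeight (hB : ∀ i j, 0 ≤ B i j) (m : ℕ) (l j : Fin n) :
    ∃ q : ℕ → Fin n, q 0 = l ∧ q (m + 1) = j ∧
      mtPow hn B (m + 1) l j ≤ pathWeight B q (m + 1) := by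
  induction m generalizing l with
  | zero =>
    refine ⟨fun t => if t = 0 then l else j, rfl, rfl, ?_⟩
    simp [pathWeight, mtPow_one hn B hB]
  | succ m ih =>
    obtain ⟨k, hk⟩ := exists_vmax_eq hn (fun k => B l k * mtPow hn B (m + 1) k j)
    obtain ⟨q, hq0, hqm, hle⟩ := ih k
    refine ⟨fun t => match t with | 0 => l | t + 1 => q t, rfl, hqm, ?_⟩
    calc mtPow hn B (m + 2) l j = B l k * mtPow hn B (m + 1) k j := hk
      _ ≤ B l (q 0) * pathWeight B q (m + 1) := by
          rw [hq0]; exact mul_le_mul_of_nonneg_left hle (hB l k)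
      _ = _ := by rw [pathWeight, pathWeight, Finset.prod_range_succ' _ (m + 1), mul_comm]

/-- Cutting out the cycle `q a → ⋯ → q (a + c) = q a`. -/
lemma pathWeight_le_mtPow_of_cycle (hB : ∀ i j, 0 ≤ B i j) (q : ℕ → Fin n) (a c s : ℕ)
    (hcyc : q (a + c) = q a) (hc : mtPow hn B c (q a) (q a) ≤ 1) :
    pathWeight B q (a + c + s) ≤ mtPow hn B (a + s) (q 0) (q (a + c + s)) := by
  have hprefix := pathWeight_le_mtPow hn B hB q a
  have hcycle : pathWeight B (fun t => q (a + t)) c ≤ 1 := by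
    refine (pathWeight_le_mtPow hn B hB _ c).trans ?_
    simpa [hcyc] using hc
  have hsuffix := pathWeight_le_mtPow hn B hB (fun t => q (a + c + t)) s
  simp only [add_zero, hcyc] at hsuffix
  rw [pathWeight_add, pathWeight_add]
  calc pathWeight B q a * pathWeight B (fun t => q (a + t)) c *
        pathWeight B (fun t => q (a + c + t)) s
      ≤ mtPow hn B a (q 0) (q a) * 1 * mtPow hn B s (q a) (q (a + c + s)) := by
        refine mul_le_mul (mul_le_mul hprefix hcycle ?_ ?_) hsuffix ?_ ?_
        · exact pathWeight_nonneg B hB _ _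
        · exact mtPow_nonneg hn B hB _ _ _
        · exact pathWeight_nonneg B hB _ _
        · exact mul_nonneg (mtPow_nonneg hn B hB _ _ _) zero_le_one
    _ ≤ mtPow hn B (a + s) (q 0) (q (a + c + s)) := by
        rw [mul_one]; exact mtPow_mul_mtPow_le hn B hB a s _ _ _

end pathWeight

section kstar

variable {n : ℕ} (hn : 0 < n) (B : Matrix (Fin n) (Fin n) ℝ)

lemma mtPow_le_kstar_of_lt {m : ℕ} (hm : m < n) (l j : Fin n) :
    mtPow hn B m l j ≤ kstar hn B l j :=
  le_vmax hn (fun k : Fin n => mtPow hn B k l j) ⟨m, hm⟩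

lemma one_le_kstar_diag (i : Fin n) : 1 ≤ kstar hn B i i := by
  simpa [mtPow] using mtPow_le_kstar_of_lt hn B hn i i

lemma mtPow_le_kstar (hB : ∀ i j, 0 ≤ B i j)
    (hTr : ∀ k, 1 ≤ k → k ≤ n → ∀ i, mtPow hn B k i i ≤ 1) (m : ℕ) (l j : Fin n) :
    mtPow hn B m l j ≤ kstar hn B l j := by
  induction m using Nat.strong_induction_on with
  | _ m ih =>
  rcases lt_or_ge m n with hm | hm
  · exact mtPow_le_kstar_of_lt hn B hm l j
  obtain ⟨m, rfl⟩ : ∃ m', m = m' + 1 := ⟨m - 1, by omega⟩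
  obtain ⟨q, rfl, rfl, hq⟩ := exists_path_mtPow_le_pathWeight hn B hB m l j
  obtain ⟨a, b, hab, hb, hqab⟩ := exists_lt_le_card_apply_eq q
  rw [Fintype.card_fin] at hb
  obtain ⟨c, rfl⟩ : ∃ c, b = a + c := ⟨b - a, by omega⟩
  obtain ⟨s, hs⟩ : ∃ s, m + 1 = a + c + s := ⟨m + 1 - (a + c), by omega⟩
  have hcut := pathWeight_le_mtPow_of_cycle hn B hB q a c s hqab.symm
    (hTr c (by omega) (by omega) (q a))
  rw [← hs] at hcut
  exact (hq.trans hcut).trans (ih (a + s) (by omega))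

lemma kstar_mul_kstar_le (hB : ∀ i j, 0 ≤ B i j)
    (hTr : ∀ k, 1 ≤ k → k ≤ n → ∀ i, mtPow hn B k i i ≤ 1) (l i j : Fin n) :
    kstar hn B l i * kstar hn B i j ≤ kstar hn B l j := by
  obtain ⟨a, ha⟩ := exists_vmax_eq hn (fun k : Fin n => mtPow hn B k l i)
  obtain ⟨b, hb⟩ := exists_vmax_eq hn (fun k : Fin n => mtPow hn B k i j)
  calc kstar hn B l i * kstar hn B i j = mtPow hn B a l i * mtPow hn B b i j :=
        congrArg₂ (· * ·) ha hb
    _ ≤ mtPow hn B (a + b) l j := mtPow_mul_mtPow_le hn B hB a b l i j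
    _ ≤ kstar hn B l j := mtPow_le_kstar hn B hB hTr _ l j

lemma kstar_mul_vmax_col_le (hB : ∀ i j, 0 ≤ B i j)
    (hTr : ∀ k, 1 ≤ k → k ≤ n → ∀ i, mtPow hn B k i i ≤ 1) (i j : Fin n) :
    kstar hn B i j * vmax hn (fun l => kstar hn B l i) ≤ vmax hn (fun l => kstar hn B l j) := by
  obtain ⟨l, hl⟩ := exists_vmax_eq hn (fun l => kstar hn B l i)
  rw [hl, mul_comm]
  exact (kstar_mul_kstar_le hn B hB hTr l i j).trans (le_vmax hn (fun l => kstar hn B l j) l)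

lemma vmax_col_kstar_pos (j : Fin n) : 0 < vmax hn (fun l => kstar hn B l j) :=
  zero_lt_one.trans_le ((one_le_kstar_diag hn B j).trans (le_vmax hn (fun l => kstar hn B l j) j))

end kstar

theorem star_mul_normalizedColumns_identity {n : ℕ} (hn : 0 < n)
    (B : Matrix (Fin n) (Fin n) ℝ)
    (hB : ∀ i j, 0 ≤ B i j)
    (hTr : ∀ k, 1 ≤ k → k ≤ n → ∀ i, mtPow hn B k i i ≤ 1) :
    ∀ i, vmax hn (fun j => kstar hn B i j / vmax hn (fun l => kstar hn B l j)) =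
      1 / vmax hn (fun l => kstar hn B l i) := by
  intro i
  have hcol := vmax_col_kstar_pos hn B
  apply le_antisymm
  · refine vmax_le hn fun j => ?_
    rw [div_le_div_iff₀ (hcol j) (hcol i), one_mul]
    exact kstar_mul_vmax_col_le hn B hB hTr i j
  · calc 1 / vmax hn (fun l => kstar hn B l i)
        ≤ kstar hn B i i / vmax hn (fun l => kstar hn B l i) := by
          gcongr
          · exact (hcol i).le
          · exact one_le_kstar_diag hn B i
      _ ≤ _ := le_vmax hn (fun j => kstar hn B i j / vmax hn (fun l => kstar hn B l j)) i
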